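/- arXiv:2208.00286 — 5 statements merged into one kernel-verified Lean document; each statement's English description precedes it below -/
import Mathlib

section
/- For every algebraically closed field K and every integer g ≥ 1, the g+1 polynomials Θ_0,…,Θ_g ∈ R_{g,1}, where Θ_i is the coefficient of y_0^{g−i}·y_1^{i} in det(y_0·T^(0)+y_1·T^(1)), are algebraically independent over K. -/
/-!
Setting: `R_{g,m-1}` is the polynomial ring over `K` in the variables `T^(l)_{ij}`,
`0 ≤ l ≤ m-1`, `1 ≤ i ≤ j ≤ g`, the entries of `m` generic symmetric `g × g` matrices,
with `SL_g` acting by congruence `T^(l) ↦ Λ · T^(l) · Λᵗ`.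
-/

open Matrix

noncomputable section

/-- The index set of the entries `(i, j)`, `i ≤ j`, of a symmetric `g × g` matrix. -/
abbrev SymIdx (g : ℕ) : Type := {p : Fin g × Fin g // p.1 ≤ p.2}

/-- A scalar matrix viewed as a matrix of constant polynomials. -/
def mapC (K : Type*) [CommRing K] (σ : Type*) {g : ℕ} (Λ : Matrix (Fin g) (Fin g) K) :
    Matrix (Fin g) (Fin g) (MvPolynomial σ K) :=
  Λ.map fun a => MvPolynomial.C a

/-- The `l`-th generic symmetric matrix `T^(l)` (`0 ≤ l ≤ m-1`), a symmetric matrix whose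
entries are the variables `T^(l)_{ij}`, with the convention `T^(l)_{ji} = T^(l)_{ij}`. -/
def genSym (K : Type*) [CommRing K] (g m : ℕ) (l : Fin m) :
    Matrix (Fin g) (Fin g) (MvPolynomial (Fin m × SymIdx g) K) :=
  Matrix.of fun i j =>
    if h : i ≤ j then MvPolynomial.X (l, ⟨(i, j), h⟩)
    else MvPolynomial.X (l, ⟨(j, i), le_of_not_ge h⟩)

/-- The `K`-algebra endomorphism sending each variable `T^(l)_{ij}` to the `(i,j)` entry of
`Λ · T^(l) · Λᵗ`. -/
def symAct (K : Type*) [CommRing K] (g m : ℕ) (Λ : Matrix (Fin g) (Fin g) K) :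
    MvPolynomial (Fin m × SymIdx g) K →ₐ[K] MvPolynomial (Fin m × SymIdx g) K :=
  MvPolynomial.aeval fun v : Fin m × SymIdx g =>
    (mapC K (Fin m × SymIdx g) Λ * genSym K g m v.1 *
      (mapC K (Fin m × SymIdx g) Λ)ᵀ) v.2.1.1 v.2.1.2

/-- The `K`-subalgebra of `SL_g`-invariant polynomials. -/
def symInvariants (K : Type*) [Field K] (g m : ℕ) :
    Subalgebra K (MvPolynomial (Fin m × SymIdx g) K) :=
  ⨅ Λ : SpecialLinearGroup (Fin g) K,
    AlgHom.equalizer (symAct K g m (Λ : Matrix (Fin g) (Fin g) K)) (AlgHom.id K _)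

/-- `Theta K g m μ` is the coefficient of the monomial `y_0^{μ 0} ⋯ y_{m-1}^{μ (m-1)}` in
`det (y_0 · T^(0) + ⋯ + y_{m-1} · T^(m-1))`, computed in the polynomial ring
`R_{g,m-1}[y_0, …, y_{m-1}]`. -/
def Theta (K : Type*) [CommRing K] (g m : ℕ) (μ : Fin m →₀ ℕ) :
    MvPolynomial (Fin m × SymIdx g) K :=
  MvPolynomial.coeff μ
    (Matrix.det (Matrix.of fun i j : Fin g =>
      ∑ l : Fin m, MvPolynomial.X l * MvPolynomial.C (genSym K g m l i j)))

/-- For `i ∈ {0, …, g}`, the polynomial `Θ_i`, the coefficient of `y_0^{g-i}·y_1^i` in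
`det (y_0 · T^(0) + y_1 · T^(1))`. -/
def ThetaPair (K : Type*) [Field K] (g : ℕ) (i : Fin (g + 1)) :
    MvPolynomial (Fin 2 × SymIdx g) K :=
  Theta K g 2 (Finsupp.single (0 : Fin 2) (g - (i : ℕ)) + Finsupp.single (1 : Fin 2) (i : ℕ))


/-!
Specialising `T⁰ ↦ t·I` and `T¹ ↦ diag(x₀, …, x_{g-1})` over `K[t]` turns `Θ_i` into
`t^(g-i) · e_i(x)`, so it suffices that these are algebraically independent. The `K`-algebra map
`Z₀ ↦ t^g`, `Z_{j+1} ↦ t^(g-1-j) · x_j` is injective: it is the substitution `t ↦ t^g` followed by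
a rescaling of the `x_j` by non-zero-divisors. Composing it with `x_j ↦ e_{j+1}(x)`, injective by
the fundamental theorem of symmetric polynomials, sends `Z_i ↦ t^(g-i) · e_i(x)`.
-/

open MvPolynomial Finset

namespace MvPolynomial

variable {R σ : Type*} [CommRing R]

theorem aeval_C_mul_X_monomial (c : σ → R) (u : σ →₀ ℕ) (a : R) :
    aeval (fun j => C (c j) * X j) (monomial u a) =
      monomial u ((u.prod fun j e => c j ^ e) * a) := by
  rw [aeval_monomial]
  simp only [mul_pow, Finsupp.prod_mul, ← map_pow]
  rw [← map_finsuppProd, algebraMap_eq, monomial_eq, C_mul]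
  ring

theorem coeff_aeval_C_mul_X (c : σ → R) (p : MvPolynomial σ R) (m : σ →₀ ℕ) :
    coeff m (aeval (fun j => C (c j) * X j) p) = (m.prod fun j e => c j ^ e) * coeff m p := by
  classical
  induction p using MvPolynomial.induction_on' with
  | monomial u a =>
    rw [aeval_C_mul_X_monomial, coeff_monomial, coeff_monomial]
    split_ifs with h
    · rw [h]
    · rw [mul_zero]
  | add p q hp hq => rw [map_add, coeff_add, coeff_add, mul_add, hp, hq]

theorem aeval_C_mul_X_injective {c : σ → R} (hc : ∀ j, c j ∈ nonZeroDivisors R) :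
    Function.Injective (aeval (fun j => C (c j) * X j) : MvPolynomial σ R →ₐ[R] _) := by
  refine (injective_iff_map_eq_zero _).2 fun p hp => ext _ _ fun m => ?_
  have := congrArg (coeff m) hp
  rwa [coeff_aeval_C_mul_X, coeff_zero, mul_left_mem_nonZeroDivisors_eq_zero_iff
    (SubmonoidClass.finsuppProd_mem _ _ _ fun j _ => pow_mem (hc j) _), ← coeff_zero m] at this

theorem aeval_esymm_injective (R : Type*) [CommRing R] (n : ℕ) :
    Function.Injective (aeval (R := R) fun j : Fin n => esymm (Fin n) R (j + 1)) := fun p q hpq =>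
  esymmAlgHom_injective R (Fintype.card_fin n).ge <| Subtype.ext <| by
    simpa only [esymmAlgHom_apply] using hpq

theorem coeff_prod_X_mul_C_add_X_mul_C {S ι : Type*} [CommRing S] [Fintype ι]
    (a : S) (b : ι → S) (i : ℕ) :
    coeff (Finsupp.single 0 (Fintype.card ι - i) + Finsupp.single 1 i)
        (∏ k, (X 0 * C a + X 1 * C (b k)) : MvPolynomial (Fin 2) S) =
      a ^ (Fintype.card ι - i) * ∑ t ∈ powersetCard i univ, ∏ k ∈ t, b k := by
  classical
  have hterm (t : Finset ι) : ((∏ k ∈ t, X 1 * C (b k)) * ∏ k ∈ univ \ t, X 0 * C a :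
      MvPolynomial (Fin 2) S) = monomial (Finsupp.single 0 (Fintype.card ι - #t) +
        Finsupp.single 1 #t) (a ^ (Fintype.card ι - #t) * ∏ k ∈ t, b k) := by
    rw [prod_const, card_univ_sdiff, prod_mul_distrib, prod_const, ← map_prod,
      mul_pow, ← map_pow, ← monomial_mul, ← C_mul_X_pow_eq_monomial, ← C_mul_X_pow_eq_monomial]
    ring
  have hμ (t : Finset ι) : Finsupp.single 0 (Fintype.card ι - #t) + Finsupp.single 1 #t =
      (Finsupp.single 0 (Fintype.card ι - i) + Finsupp.single 1 i : Fin 2 →₀ ℕ) ↔ #t = i :=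
    ⟨fun h => by simpa using congrArg (· 1) h, fun h => by rw [h]⟩
  simp_rw [add_comm (X 0 * C a : MvPolynomial (Fin 2) S), prod_add, coeff_sum, hterm,
    coeff_monomial, hμ]
  rw [← sum_filter, powersetCard_eq_filter, mul_sum]
  refine sum_congr rfl fun t ht => ?_
  rw [(mem_filter.1 ht).2]

end MvPolynomial

theorem algebraicIndependent_C_X_pow_mul_esymm (R : Type*) [CommRing R] {g : ℕ} (hg : 0 < g) :
    AlgebraicIndependent R fun i : Fin (g + 1) =>
      (C (Polynomial.X ^ (g - i)) * esymm (Fin g) (Polynomial R) i :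
        MvPolynomial (Fin g) (Polynomial R)) := by
  have h := (((((algebraicIndependent_X (Option (Fin g)) R).map'
      (optionEquivRight R (Fin g)).injective).map'
      (f := mapAlgHom (Polynomial.expand R g)) (map_injective _ (Polynomial.expand_injective hg))).map'
      (f := (aeval fun j : Fin g => C (Polynomial.X ^ (g - 1 - j)) * X j).restrictScalars R)
        (aeval_C_mul_X_injective fun _ => (Polynomial.monic_X_pow _).mem_nonZeroDivisors)).map'
      (f := (aeval fun j : Fin g => esymm (Fin g) (Polynomial R) (j + 1)).restrictScalars R)
        (aeval_esymm_injective (Polynomial R) g)).comp _ (finSuccEquiv g).injective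
  convert h using 1
  funext i
  induction i using Fin.cases with
  | zero => simp
  | succ j => simp [Nat.sub_sub, add_comm]

section Specialization

variable (K : Type*) {S : Type*} [CommRing K] [CommRing S] [Algebra K S] {g m : ℕ}

def evalSym (A : Fin m → Matrix (Fin g) (Fin g) S) :
    MvPolynomial (Fin m × SymIdx g) K →ₐ[K] S :=
  aeval fun v => A v.1 v.2.1.1 v.2.1.2

variable {K} {A : Fin m → Matrix (Fin g) (Fin g) S}

theorem evalSym_genSym (hA : ∀ l, (A l).IsSymm) (l : Fin m) (i j : Fin g) :
    evalSym K A (genSym K g m l i j) = A l i j := by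
  rw [genSym, Matrix.of_apply]
  split_ifs
  · exact aeval_X _ _
  · exact (aeval_X _ _).trans ((hA l).apply i j)

theorem evalSym_theta (hA : ∀ l, (A l).IsSymm) (μ : Fin m →₀ ℕ) :
    evalSym K A (Theta K g m μ) =
      coeff μ (Matrix.det (Matrix.of fun i j => ∑ l, X l * C (A l i j))) := by
  rw [Theta, ← AlgHom.coe_toRingHom, ← coeff_map, RingHom.map_det]
  congr 2
  ext i j
  simp [evalSym_genSym hA]

theorem det_of_sum_X_mul_C_diagonal {n : Type*} [Fintype n] [DecidableEq n]
    (d : Fin m → n → S) :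
    Matrix.det (Matrix.of fun i j => ∑ l, X l * C (Matrix.diagonal (d l) i j)) =
      ∏ k, ∑ l, (X l * C (d l k) : MvPolynomial (Fin m) S) := by
  rw [← Matrix.det_diagonal]
  congr 1
  ext i j
  by_cases h : i = j <;> simp [h]

end Specialization

theorem evalSym_thetaPair (K : Type*) [Field K] (g : ℕ) (i : Fin (g + 1)) :
    evalSym K (fun l => Matrix.diagonal (![fun _ => C Polynomial.X, X] l)) (ThetaPair K g i) =
      (C (Polynomial.X ^ (g - i)) * esymm (Fin g) (Polynomial K) i :
        MvPolynomial (Fin g) (Polynomial K)) := by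
  rw [ThetaPair, evalSym_theta fun l => Matrix.isSymm_diagonal _, det_of_sum_X_mul_C_diagonal]
  simp only [Fin.sum_univ_two, Matrix.cons_val_zero, Matrix.cons_val_one]
  have := coeff_prod_X_mul_C_add_X_mul_C (C Polynomial.X : MvPolynomial (Fin g) (Polynomial K)) X i
  rw [Fintype.card_fin] at this
  rw [this, esymm, map_pow]

theorem stmt3_general (K : Type*) [Field K] (g : ℕ) (hg : 1 ≤ g) :
    AlgebraicIndependent K (ThetaPair K g) := by
  have h := algebraicIndependent_C_X_pow_mul_esymm K hg
  rw [← funext (evalSym_thetaPair K g)] at h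
  exact h.of_comp

/-- For every algebraically closed field `K` and every integer `g ≥ 1`, the
`g+1` polynomials `Θ_0, …, Θ_g` are algebraically independent over `K`. -/
theorem stmt3 (K : Type*) [Field K] [IsAlgClosed K] (g : ℕ) (hg : 1 ≤ g) :
    AlgebraicIndependent K (ThetaPair K g) :=
  stmt3_general K g hg
end
end

section
/- Let K be an algebraically closed field, g ≥ 2 an even integer, and r ≥ 0 an integer. Then every SL_g-invariant polynomial in R_{g,r} that is homogeneous of degree g/2 is zero. -/
/-!
Setting: `R_{g,m-1}` is the polynomial ring over `K` in the variables `T^(l)_{ij}`,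
`0 ≤ l ≤ m-1`, `1 ≤ i ≤ j ≤ g`, the entries of `m` generic symmetric `g × g` matrices,
with `SL_g` acting by congruence `T^(l) ↦ Λ · T^(l) · Λᵗ`.
-/

open Matrix

noncomputable section

/-
Under the diagonal torus of `SL_g`, a monomial is an eigenvector whose character records, for
each index `i`, its torus weight: the number of occurrences of `i` among the indices of its
variables (`T_ii` counting twice). Invariance forces all `g` torus weights of a monomial of `F`
to agree, and they add up to twice its degree, so in degree `g/2` each of them is `1`. Thus no
monomial of `F` contains a diagonal variable, and each is `ρ · T^(l)_{ik}` with `k ≠ i` and `ρ`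
free of the index `i`. The transvection `T ↦ (1 + E_ij) T (1 + E_ij)ᵀ` maps such a monomial to
itself plus `ρ · T^(l)_{jk}`. Taking `j := k` for one monomial `ρ · T^(l)_{ij}` of `F`, the
monomial `ρ · T^(l)_{jj}` acquires the nonzero coefficient of `ρ · T^(l)_{ij}` in the image of
`F`, although it does not occur in `F`.
-/

open MvPolynomial

theorem eq_of_forall_pow_eq_pow {K : Type*} [Field K] [Infinite K] {n p : ℕ}
    (h : ∀ a : K, a ≠ 0 → a ^ n = a ^ p) : n = p := by
  -- multiplying by `a` makes the identity hold at `a = 0` as well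
  have hX : (Polynomial.X ^ (n + 1) : Polynomial K) = Polynomial.X ^ (p + 1) :=
    Polynomial.funext fun a => by
      rcases eq_or_ne a 0 with rfl | ha
      · simp
      · simp [pow_succ, h a ha]
  simpa using congrArg Polynomial.natDegree hX

theorem Finsupp.prod_pow_pow_eq_pow_weight {σ M : Type*} [CommMonoid M] (a : M) (w : σ → ℕ)
    (ν : σ →₀ ℕ) : (ν.prod fun v k => (a ^ w v) ^ k) = a ^ Finsupp.weight w ν := by
  simp only [Finsupp.weight_apply, Finsupp.sum, Finsupp.prod, smul_eq_mul, ← pow_mul,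
    Finset.prod_pow_eq_pow_sum, mul_comm]

theorem Finsupp.exists_eq_add_single_of_weight_eq_one {σ : Type*} {w : σ → ℕ}
    {μ : σ →₀ ℕ} (h : Finsupp.weight w μ = 1) :
    ∃ v ρ, w v = 1 ∧ Finsupp.weight w ρ = 0 ∧ μ = ρ + Finsupp.single v 1 := by
  obtain ⟨v, hv⟩ : ∃ v, μ v ≠ 0 ∧ w v ≠ 0 := by
    by_contra! h0
    rw [Finsupp.weight_apply, Finsupp.sum, Finset.sum_eq_zero fun v hv => by
      simp [h0 v (Finsupp.mem_support_iff.mp hv)]] at h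
    exact zero_ne_one h
  have hsplit := Finsupp.weight_sub_single_add (w := w) hv.1
  exact ⟨v, μ - Finsupp.single v 1, by omega, by omega,
    (Finsupp.sub_add_single_one_cancel hv.1).symm⟩

theorem MvPolynomial.coeff_aeval_C_mul_X_s7 {R σ : Type*} [CommSemiring R] (s : σ → R)
    (F : MvPolynomial σ R) (ν : σ →₀ ℕ) :
    coeff ν (aeval (fun v => C (s v) * X v) F) = (ν.prod fun v k => s v ^ k) * coeff ν F := by
  classical
  induction F using MvPolynomial.induction_on' with
  | monomial μ c =>
    rw [aeval_monomial, coeff_monomial]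
    simp only [mul_pow, Finsupp.prod_mul, ← map_pow]
    rw [Finsupp.prod, ← map_prod, ← Finsupp.prod, ← monomial_eq, algebraMap_eq,
      C_mul_monomial, coeff_monomial]
    split_ifs with hμν
    · rw [hμν, mul_comm]
    · rw [mul_zero]
  | add p q hp hq => simp only [map_add, coeff_add, hp, hq, mul_add]

theorem AlgHom.map_monomial_eq_self {R σ : Type*} [CommSemiring R]
    (φ : MvPolynomial σ R →ₐ[R] MvPolynomial σ R) {ρ : σ →₀ ℕ}
    (h : ∀ v ∈ ρ.support, φ (X v) = X v) (c : R) : φ (monomial ρ c) = monomial ρ c := by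
  rw [monomial_eq, Finsupp.prod, map_mul, map_prod, MvPolynomial.algHom_C]
  simp_rw [map_pow]
  rw [Finset.prod_congr rfl fun v hv => by rw [h v hv], algebraMap_eq]

theorem Matrix.transvection_mul_mul_transpose_apply {n R : Type*} [Fintype n] [DecidableEq n]
    [CommRing R] (M : Matrix n n R) (i j : n) (c : R) (a b : n) :
    (transvection i j c * M * (transvection i j c)ᵀ) a b =
      M a b + (if a = i then c * M j b else 0) + (if b = i then c * M a j else 0) +
        (if a = i ∧ b = i then c * c * M j j else 0) := by
  simp only [transvection, Matrix.transpose_add, Matrix.transpose_one, Matrix.transpose_single,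
    add_mul, mul_add, one_mul, mul_one, Matrix.add_apply, Matrix.mul_assoc]
  by_cases ha : a = i <;> by_cases hb : b = i <;> simp [ha, hb] <;> ring

namespace SymIdx

variable {g : ℕ}

def mk (x y : Fin g) : SymIdx g :=
  if h : x ≤ y then ⟨(x, y), h⟩ else ⟨(y, x), le_of_not_ge h⟩

theorem mk_of_le {x y : Fin g} (h : x ≤ y) : mk x y = ⟨(x, y), h⟩ := dif_pos h

theorem mk_comm (x y : Fin g) : mk x y = mk y x := by
  rcases lt_trichotomy x y with h | rfl | h
  · simp [mk, h.le, not_le.mpr h]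
  · rfl
  · simp [mk, h.le, not_le.mpr h]

theorem mk_val (p : SymIdx g) : mk p.1.1 p.1.2 = p := mk_of_le p.2

theorem mk_left_injective {x y z : Fin g} (h : mk x y = mk x z) : y = z := by
  unfold mk at h
  split_ifs at h <;> simp_all [Subtype.ext_iff]

def count (i : Fin g) (p : SymIdx g) : ℕ :=
  (if p.1.1 = i then 1 else 0) + (if p.1.2 = i then 1 else 0)

theorem sum_count (p : SymIdx g) : ∑ i, p.count i = 2 := by
  simp [count, Finset.sum_add_distrib]

theorem count_mk_self (i : Fin g) : (mk i i).count i = 2 := by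
  simp [count, mk]

theorem exists_eq_mk_of_count_eq_one {i : Fin g} {p : SymIdx g} (h : p.count i = 1) :
    ∃ k ≠ i, p = mk i k := by
  obtain ⟨⟨a, b⟩, hab⟩ := p
  by_cases ha : a = i
  · subst ha
    have hb : b ≠ a := by rintro rfl; simp [count] at h
    exact ⟨b, hb, (mk_of_le hab).symm⟩
  · have hb : b = i := by by_contra hb; simp [count, ha, hb] at h
    subst hb
    exact ⟨a, ha, by rw [mk_comm, mk_of_le hab]⟩

end SymIdx

section

variable {K : Type*} [Field K] {g m : ℕ}

theorem genSym_apply (l : Fin m) (x y : Fin g) :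
    genSym K g m l x y = X (l, SymIdx.mk x y) := by
  by_cases h : x ≤ y <;> simp [genSym, SymIdx.mk, h]

theorem symAct_X (Λ : Matrix (Fin g) (Fin g) K) (v : Fin m × SymIdx g) :
    symAct K g m Λ (X v) =
      (mapC K (Fin m × SymIdx g) Λ * genSym K g m v.1 * (mapC K (Fin m × SymIdx g) Λ)ᵀ)
        v.2.1.1 v.2.1.2 :=
  aeval_X _ _

theorem mapC_transvection (σ : Type*) (i j : Fin g) (c : K) :
    mapC K σ (transvection i j c) = transvection i j (C c) := by
  change (1 + single i j c).map (C : K →+* MvPolynomial σ K) = _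
  rw [Matrix.map_add _ (map_add _), Matrix.map_one _ (map_zero _) (map_one _), Matrix.map_single]
  rfl

theorem symAct_diagonal (d : Fin g → K) :
    symAct K g m (diagonal d) = aeval fun v => C (d v.2.1.1 * d v.2.1.2) * X v := by
  refine MvPolynomial.algHom_ext fun v => ?_
  rw [symAct_X, aeval_X, mapC, diagonal_map (map_zero _), diagonal_transpose, mul_diagonal,
    diagonal_mul, genSym_apply, SymIdx.mk_val, map_mul]
  ring

theorem symAct_transvection_X_of_count_eq_zero {i : Fin g} (j : Fin g) {v : Fin m × SymIdx g}
    (h : v.2.count i = 0) : symAct K g m (transvection i j 1) (X v) = X v := by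
  have ha : v.2.1.1 ≠ i := by intro ha; simp [SymIdx.count, ha] at h
  have hb : v.2.1.2 ≠ i := by intro hb; simp [SymIdx.count, hb] at h
  rw [symAct_X, mapC_transvection, transvection_mul_mul_transpose_apply, genSym_apply,
    SymIdx.mk_val]
  simp [ha, hb]

theorem symAct_transvection_X_mk {i k : Fin g} (j : Fin g) (hk : k ≠ i) (l : Fin m) :
    symAct K g m (transvection i j 1) (X (l, SymIdx.mk i k)) =
      X (l, SymIdx.mk i k) + X (l, SymIdx.mk j k) := by
  rw [symAct_X, mapC_transvection, transvection_mul_mul_transpose_apply]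
  by_cases hik : i ≤ k
  · simp [SymIdx.mk_of_le hik, genSym_apply, hk]
  · rw [SymIdx.mk_comm i k, SymIdx.mk_comm j k]
    simp [SymIdx.mk_of_le (le_of_not_ge hik), genSym_apply, hk]

def torusWeight (i : Fin g) : ((Fin m × SymIdx g) →₀ ℕ) →+ ℕ :=
  Finsupp.weight fun v => v.2.count i

theorem sum_torusWeight (ν : (Fin m × SymIdx g) →₀ ℕ) :
    ∑ i, torusWeight i ν = 2 * ν.degree := by
  simp only [torusWeight, Finsupp.weight_apply, Finsupp.sum, smul_eq_mul]
  rw [Finset.sum_comm]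
  simp_rw [← Finset.mul_sum, SymIdx.sum_count, Finsupp.degree_apply, Finset.mul_sum, mul_comm]

theorem torusWeight_eq_of_invariant [Infinite K] {F : MvPolynomial (Fin m × SymIdx g) K}
    (hinv : ∀ Λ : SpecialLinearGroup (Fin g) K, symAct K g m Λ F = F)
    {ν : (Fin m × SymIdx g) →₀ ℕ} (hν : coeff ν F ≠ 0) (i j : Fin g) :
    torusWeight i ν = torusWeight j ν := by
  rcases eq_or_ne i j with rfl | hij
  · rfl
  refine eq_of_forall_pow_eq_pow (K := K) fun a ha => ?_
  set d : Fin g → K := fun x => (if x = i then a else 1) * (if x = j then a⁻¹ else 1)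
  have hdet : (diagonal d).det = 1 := by
    rw [det_diagonal, Finset.prod_mul_distrib, Finset.prod_ite_eq', Finset.prod_ite_eq',
      if_pos (Finset.mem_univ _), if_pos (Finset.mem_univ _), mul_inv_cancel₀ ha]
  have hd : ∀ x, d x = a ^ (if x = i then 1 else 0) * a⁻¹ ^ (if x = j then 1 else 0) := by
    intro x
    simp only [d]
    split_ifs <;> simp
  have h : symAct K g m (diagonal d) F = F := hinv ⟨diagonal d, hdet⟩
  replace h := congrArg (coeff ν) h
  rw [symAct_diagonal, coeff_aeval_C_mul_X_s7] at h
  simp_rw [hd, ← mul_mul_mul_comm, ← pow_add, mul_pow, Finsupp.prod_mul,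
    Finsupp.prod_pow_pow_eq_pow_weight] at h
  have h1 : a ^ torusWeight i ν * a⁻¹ ^ torusWeight j ν = 1 :=
    mul_right_cancel₀ hν (h.trans (one_mul _).symm)
  rwa [inv_pow, mul_inv_eq_one₀ (pow_ne_zero _ ha)] at h1

theorem torusWeight_mul_eq [Infinite K] {F : MvPolynomial (Fin m × SymIdx g) K}
    (hinv : ∀ Λ : SpecialLinearGroup (Fin g) K, symAct K g m Λ F = F)
    {ν : (Fin m × SymIdx g) →₀ ℕ} (hν : coeff ν F ≠ 0) (i : Fin g) :
    g * torusWeight i ν = 2 * ν.degree := by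
  rw [← sum_torusWeight, Finset.sum_congr rfl fun j _ => torusWeight_eq_of_invariant hinv hν j i,
    Finset.sum_const, Finset.card_univ, Fintype.card_fin, smul_eq_mul]

theorem apply_mk_self_eq_zero_of_torusWeight_eq_one {i : Fin g}
    {μ : (Fin m × SymIdx g) →₀ ℕ} (h : torusWeight i μ = 1) (l : Fin m) :
    μ (l, SymIdx.mk i i) = 0 := by
  by_contra hμ
  have h2 := Finsupp.le_weight_of_ne_zero' (fun v : Fin m × SymIdx g => v.2.count i) hμ
  rw [SymIdx.count_mk_self] at h2
  change 2 ≤ torusWeight i μ at h2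
  omega

theorem exists_eq_add_single_mk_of_torusWeight_eq_one {i : Fin g}
    {μ : (Fin m × SymIdx g) →₀ ℕ} (h : torusWeight i μ = 1) :
    ∃ l k ρ, k ≠ i ∧ torusWeight i ρ = 0 ∧
      μ = ρ + Finsupp.single (l, SymIdx.mk i k) 1 := by
  obtain ⟨v, ρ, hv, hρ, rfl⟩ := Finsupp.exists_eq_add_single_of_weight_eq_one h
  obtain ⟨k, hk, hvk⟩ := SymIdx.exists_eq_mk_of_count_eq_one hv
  exact ⟨v.1, k, ρ, hk, hρ, by rw [← hvk]⟩

theorem symAct_transvection_monomial {i k : Fin g} (j : Fin g) (hk : k ≠ i) (l : Fin m)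
    {ρ : (Fin m × SymIdx g) →₀ ℕ} (hρ : torusWeight i ρ = 0) (c : K) :
    symAct K g m (transvection i j 1) (monomial (ρ + Finsupp.single (l, SymIdx.mk i k) 1) c) =
      monomial (ρ + Finsupp.single (l, SymIdx.mk i k) 1) c +
        monomial (ρ + Finsupp.single (l, SymIdx.mk j k) 1) c := by
  have hfix : ∀ v ∈ ρ.support, symAct K g m (transvection i j 1) (X v) = X v := fun v hv =>
    symAct_transvection_X_of_count_eq_zero j <| by
      by_contra hv'
      have hle := Finsupp.le_weight (fun v : Fin m × SymIdx g => v.2.count i) hv' ρ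
      exact Finsupp.mem_support_iff.mp hv (Nat.le_zero.mp (hρ ▸ hle))
  simp only [monomial_add_single, pow_one, map_mul, AlgHom.map_monomial_eq_self _ hfix,
    symAct_transvection_X_mk j hk, mul_add]

theorem eq_of_add_single_mk_eq_add_single_mk_self {j k : Fin g} {l l' : Fin m}
    {ρ ρ' : (Fin m × SymIdx g) →₀ ℕ} (hρ : ρ (l', SymIdx.mk j j) = 0)
    (hρ' : ρ' (l', SymIdx.mk j j) = 0)
    (h : ρ + Finsupp.single (l, SymIdx.mk j k) 1 = ρ' + Finsupp.single (l', SymIdx.mk j j) 1) :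
    ρ = ρ' ∧ l = l' ∧ k = j := by
  classical
  have hp := congrArg (· (l', SymIdx.mk j j)) h
  simp only [Finsupp.add_apply, hρ, hρ', Finsupp.single_apply] at hp
  split_ifs at hp with hv
  obtain ⟨hl, hk⟩ := Prod.mk.inj hv
  rw [hl, SymIdx.mk_left_injective hk] at h
  exact ⟨add_right_cancel h, hl, SymIdx.mk_left_injective hk⟩

theorem symAct_transvection_eq_add_sum {F : MvPolynomial (Fin m × SymIdx g) K} {i : Fin g}
    (j : Fin g) (l : ((Fin m × SymIdx g) →₀ ℕ) → Fin m)
    (k : ((Fin m × SymIdx g) →₀ ℕ) → Fin g)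
    (ρ : ((Fin m × SymIdx g) →₀ ℕ) → (Fin m × SymIdx g) →₀ ℕ)
    (hk : ∀ μ ∈ F.support, k μ ≠ i) (hρ : ∀ μ ∈ F.support, torusWeight i (ρ μ) = 0)
    (hμ : ∀ μ ∈ F.support, μ = ρ μ + Finsupp.single (l μ, SymIdx.mk i (k μ)) 1) :
    symAct K g m (transvection i j 1) F = F + ∑ μ ∈ F.support,
      monomial (ρ μ + Finsupp.single (l μ, SymIdx.mk j (k μ)) 1) (coeff μ F) := by
  calc symAct K g m (transvection i j 1) F
      = ∑ μ ∈ F.support, symAct K g m (transvection i j 1) (monomial μ (coeff μ F)) := by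
        conv_lhs => rw [F.as_sum]
        rw [map_sum]
    _ = ∑ μ ∈ F.support, (monomial μ (coeff μ F) +
          monomial (ρ μ + Finsupp.single (l μ, SymIdx.mk j (k μ)) 1) (coeff μ F)) := by
        refine Finset.sum_congr rfl fun μ hm => ?_
        have h := symAct_transvection_monomial j (hk μ hm) (l μ) (hρ μ hm) (coeff μ F)
        rwa [← hμ μ hm] at h
    _ = _ := by rw [Finset.sum_add_distrib, ← F.as_sum]

theorem eq_zero_of_forall_torusWeight_eq_one {F : MvPolynomial (Fin m × SymIdx g) K} (i : Fin g)
    (hinv : ∀ j, j ≠ i → symAct K g m (transvection i j 1) F = F)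
    (hW : ∀ ν, coeff ν F ≠ 0 → ∀ i, torusWeight i ν = 1) : F = 0 := by
  classical
  have hdec : ∀ μ ∈ F.support, ∃ l k ρ, k ≠ i ∧ torusWeight i ρ = 0 ∧
      μ = ρ + Finsupp.single (l, SymIdx.mk i k) 1 :=
    fun μ hμ => exists_eq_add_single_mk_of_torusWeight_eq_one (hW μ (mem_support_iff.mp hμ) i)
  by_contra hF
  obtain ⟨ν, hν⟩ := support_nonempty.mpr hF
  -- so that `choose!` yields total functions
  have : Nonempty (Fin m) := ⟨(hdec ν hν).choose⟩
  have : Nonempty (Fin g) := ⟨i⟩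
  choose! l k ρ hk hρ hμ using hdec
  set j := k ν
  have hsum := symAct_transvection_eq_add_sum j l k ρ hk hρ hμ
  rw [hinv j (hk ν hν), left_eq_add] at hsum
  have hρ_diag : ∀ μ ∈ F.support, ρ μ (l ν, SymIdx.mk j j) = 0 := fun μ hm => by
    have h := congrArg (· (l ν, SymIdx.mk j j)) (hμ μ hm)
    have h0 := apply_mk_self_eq_zero_of_torusWeight_eq_one (hW μ (mem_support_iff.mp hm) j) (l ν)
    simp only [Finsupp.add_apply] at h
    omega
  have hcoeff := congrArg (coeff (ρ ν + Finsupp.single (l ν, SymIdx.mk j j) 1)) hsum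
  rw [coeff_sum, Finset.sum_eq_single ν, coeff_monomial, if_pos rfl, coeff_zero] at hcoeff
  · exact mem_support_iff.mp hν hcoeff
  · intro μ hm hne
    rw [coeff_monomial, if_neg]
    intro heq
    obtain ⟨hρν, hl, hkj⟩ :=
      eq_of_add_single_mk_eq_add_single_mk_self (hρ_diag μ hm) (hρ_diag ν hν) heq
    exact hne (by rw [hμ μ hm, hμ ν hν, hρν, hl, hkj])
  · exact fun h => absurd hν h

end

/-- Let `K` be algebraically closed, `g ≥ 2` even, `r ≥ 0`.  Every
`SL_g`-invariant polynomial that is homogeneous of degree `g/2` is zero. -/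
theorem stmt7 (K : Type*) [Field K] [IsAlgClosed K] (g r : ℕ) (hg : 2 ≤ g) (heven : Even g)
    (F : MvPolynomial (Fin (r + 1) × SymIdx g) K)
    (hinv : ∀ Λ : SpecialLinearGroup (Fin g) K,
      symAct K g (r + 1) (Λ : Matrix (Fin g) (Fin g) K) F = F)
    (hhom : F.IsHomogeneous (g / 2)) : F = 0 := by
  refine eq_zero_of_forall_torusWeight_eq_one ⟨0, by omega⟩
    (fun j hj => hinv ⟨transvection _ j 1, det_transvection_of_ne _ _ hj.symm 1⟩)
    fun ν hν i => ?_
  have hdeg : ν.degree = g / 2 := by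
    rw [Finsupp.degree_eq_weight_one]
    exact hhom hν
  have h := torusWeight_mul_eq hinv hν i
  rw [hdeg, Nat.two_mul_div_two_of_even heven] at h
  exact (mul_eq_left₀ (by omega)).mp h
end
end

section
/- Let K be an algebraically closed field, g ≥ 1 an integer, and Q an invertible symmetric g×g matrix over K; if char K = 2, assume in addition that at least one diagonal entry of Q is nonzero. Then for every ν ∈ K with ν^g = det(Q) there exists Λ ∈ SL_g(K) such that Λ·Q·Λᵗ = ν·1_g. -/
/-!
Over a field in which every element is a square, a nondegenerate symmetric bilinear form that
is not alternating has an orthonormal basis: split off a unit vector `e` and recurse on `e^⊥`.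
The point, in characteristic `2`, is to choose `e` so that the form stays non-alternating on
`e^⊥`. Taking the basis as the rows of `P` gives `P Q Pᵀ = 1`, hence `(det P)² det Q = 1`, and
`Λ = μ E P` with `μ² = ν` and `E = diag(±1, 1, …, 1)` has determinant `1` and `Λ Q Λᵀ = ν • 1`.
-/

open Matrix Module

namespace LinearMap.BilinForm

variable {K V : Type*} [Field K] [AddCommGroup V] [Module K V] {B : LinearMap.BilinForm K V}

theorem exists_anisotropic_orthogonal_pair_of_orthogonal (hB : B.IsSymm)
    (hnd : B.Nondegenerate) {x y : V} (hx : B x x ≠ 0) (hy : y ≠ 0) (hxy : B x y = 0) :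
    ∃ v w, B v v ≠ 0 ∧ B v w = 0 ∧ B w w ≠ 0 := by
  by_cases hiso : ∃ w, B x w = 0 ∧ B w w ≠ 0
  · obtain ⟨w, hxw, hw⟩ := hiso
    exact ⟨x, w, hx, hxw, hw⟩
  push Not at hiso
  -- Now `x^⊥` is totally isotropic, and the pair below is anisotropic because `B y z ≠ 0`.
  obtain ⟨u, hu⟩ : ∃ u, B y u ≠ 0 := by
    by_contra! h
    exact hy (hnd.1 y h)
  set z := u - (B x u / B x x) • x
  have hxz : B x z = 0 := by
    simp only [z, map_sub, map_smul, smul_eq_mul]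
    field_simp
    ring
  have hyz : B y z = B y u := by simp [z, hB.eq y x, hxy]
  refine ⟨x + y, B y z • x - B x x • z, ?_, ?_, ?_⟩
  · simpa [hB.eq y x, hxy, hiso y hxy] using hx
  · simp only [map_add, LinearMap.add_apply, map_sub, map_smul, smul_eq_mul, hxz, hB.eq y x, hxy]
    ring
  · simp [hB.eq z x, hxz, hiso z hxz, hyz, hu, hx]

theorem exists_anisotropic_orthogonal_pair [FiniteDimensional K V] (hB : B.IsSymm)
    (hnd : B.Nondegenerate) (hV : 2 ≤ finrank K V) {x : V} (hx : B x x ≠ 0) :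
    ∃ v w, B v v ≠ 0 ∧ B v w = 0 ∧ B w w ≠ 0 := by
  obtain ⟨y, hy, hy0⟩ := Submodule.exists_mem_ne_zero_of_ne_bot
    (LinearMap.ker_ne_bot_of_finrank_lt (f := B x) (by rw [finrank_self]; omega))
  exact exists_anisotropic_orthogonal_pair_of_orthogonal hB hnd hx hy0 hy

theorem exists_orthonormal_family (hK : ∀ a : K, IsSquare a) [FiniteDimensional K V]
    (hB : B.IsSymm) (hnd : B.Nondegenerate) (hani : finrank K V ≠ 0 → ∃ x, B x x ≠ 0) :
    ∃ b : Fin (finrank K V) → V, ∀ i j, B (b i) (b j) = (1 : Matrix _ _ K) i j := by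
  induction hn : finrank K V generalizing V with
  | zero => exact ⟨Fin.elim0, fun i => i.elim0⟩
  | succ d ih =>
    rw [hn] at hani
    obtain ⟨v, hv, hperp⟩ : ∃ v, B v v ≠ 0 ∧ (d ≠ 0 → ∃ w, B v w = 0 ∧ B w w ≠ 0) := by
      obtain ⟨x, hx⟩ := hani d.succ_ne_zero
      rcases eq_or_ne d 0 with rfl | hd
      · exact ⟨x, hx, fun h => (h rfl).elim⟩
      · obtain ⟨v, w, hv, hvw, hw⟩ := exists_anisotropic_orthogonal_pair hB hnd (by omega) hx
        exact ⟨v, hv, fun _ => ⟨w, hvw, hw⟩⟩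
    obtain ⟨c, hc⟩ := hK (B v v)⁻¹
    have he : B (c • v) (c • v) = 1 := by
      simp only [map_smul, LinearMap.smul_apply, smul_eq_mul]
      rw [← mul_assoc, ← hc, inv_mul_cancel₀ hv]
    have hW : finrank K (B.orthogonal (K ∙ (c • v))) = d := by
      rw [finrank_orthogonal hnd, finrank_span_singleton fun h => by simp [h] at he, hn]
      rfl
    obtain ⟨b, hb⟩ := ih (B := B.restrict _) (hB.restrict _)
      (restrict_nondegenerate_orthogonal_spanSingleton B hnd hB.isRefl (he ▸ one_ne_zero))
      (fun hd => by
        obtain ⟨w, hvw, hw⟩ := hperp (hW ▸ hd)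
        refine ⟨⟨w, fun u hu => ?_⟩, hw⟩
        obtain ⟨a, rfl⟩ := Submodule.mem_span_singleton.1 hu
        simp [hvw]) hW
    refine ⟨Fin.cons (c • v) fun i => (b i : V), fun i j => ?_⟩
    refine Fin.cases ?_ (fun i => ?_) i <;> refine Fin.cases ?_ (fun j => ?_) j
    · simpa using he
    · rw [Fin.cons_zero, Fin.cons_succ, one_apply_ne (Fin.succ_ne_zero j).symm]
      exact (b j).2 _ (Submodule.mem_span_singleton_self _)
    · rw [Fin.cons_zero, Fin.cons_succ, one_apply_ne (Fin.succ_ne_zero i), hB.eq]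
      exact (b i).2 _ (Submodule.mem_span_singleton_self _)
    · simpa [Matrix.one_apply] using hb i j

end LinearMap.BilinForm

namespace Matrix

theorem mul_mul_transpose_apply {m n R : Type*} [Fintype n] [CommSemiring R]
    (P : Matrix m n R) (Q : Matrix n n R) (i j : m) : (P * Q * Pᵀ) i j = P i ⬝ᵥ Q *ᵥ P j := by
  simp only [mul_apply, transpose_apply, dotProduct, mulVec, Finset.sum_mul, Finset.mul_sum]
  rw [Finset.sum_comm]
  exact Finset.sum_congr rfl fun _ _ => Finset.sum_congr rfl fun _ _ => by ring

variable {n K : Type*} [Fintype n] [DecidableEq n] [Field K]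

theorem exists_dotProduct_mulVec_self_ne_zero [Nonempty n] {Q : Matrix n n K} (hQ : Q.IsSymm)
    (hdet : Q.det ≠ 0) (h2 : ringChar K = 2 → ∃ i, Q i i ≠ 0) : ∃ x, x ⬝ᵥ Q *ᵥ x ≠ 0 := by
  by_cases hchar : (2 : K) = 0
  · obtain ⟨i, hi⟩ := h2 (CharP.ringChar_of_prime_eq_zero Nat.prime_two hchar)
    exact ⟨Pi.single i 1, by simpa⟩
  · have : Invertible (2 : K) := invertibleOfNonzero hchar
    have hQ0 : toBilin' Q ≠ 0 := by
      rw [Ne, map_eq_zero_iff _ (LinearEquiv.injective _)]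
      rintro rfl
      simp at hdet
    simpa [toBilin'_apply'] using LinearMap.BilinForm.exists_bilinForm_self_ne_zero hQ0
      (LinearMap.BilinForm.isSymm_iff.1 (isSymm_toBilin'_iff_isSymm.2 hQ))

theorem exists_mul_mul_transpose_eq_one (hK : ∀ a : K, IsSquare a) {Q : Matrix n n K}
    (hQ : Q.IsSymm) (hdet : Q.det ≠ 0) (hani : ∃ x, x ⬝ᵥ Q *ᵥ x ≠ 0) :
    ∃ P : Matrix n n K, P * Q * Pᵀ = 1 := by
  obtain ⟨b, hb⟩ := LinearMap.BilinForm.exists_orthonormal_family hK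
    (isSymm_toBilin'_iff_isSymm.2 hQ)
    (LinearMap.BilinForm.nondegenerate_toBilin'_iff_det_ne_zero.2 hdet)
    fun _ => by simpa [toBilin'_apply'] using hani
  let e := Fintype.equivFinOfCardEq (finrank_fintype_fun_eq_card (η := n) K).symm
  refine ⟨of fun i => b (e i), ?_⟩
  ext i j
  have h := hb (e i) (e j)
  simp only [toBilin'_apply', one_apply, e.injective.eq_iff] at h
  rwa [mul_mul_transpose_apply, one_apply]

theorem exists_specialLinearGroup_mul_mul_transpose_eq_smul_one [Nonempty n]
    (hK : ∀ a : K, IsSquare a) {P Q : Matrix n n K} (hPQ : P * Q * Pᵀ = 1) {ν : K}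
    (hν : ν ^ Fintype.card n = Q.det) :
    ∃ Λ : SpecialLinearGroup n K, (Λ : Matrix n n K) * Q * (Λ : Matrix n n K)ᵀ = ν • 1 := by
  obtain ⟨μ, rfl⟩ := hK ν
  set ε := μ ^ Fintype.card n * P.det
  have hε : ε * ε = 1 := by
    have := congrArg det hPQ
    rw [det_mul, det_mul, det_transpose, det_one, ← hν] at this
    rw [← this]; ring
  obtain ⟨i⟩ := ‹Nonempty n›
  set E := diagonal (Function.update (1 : n → K) i ε)
  have hEE : E * E = 1 := by
    rw [diagonal_mul_diagonal, ← diagonal_one]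
    congr 1
    ext k
    by_cases hk : k = i <;> simp [hk, hε]
  have hdetE : E.det = ε := by
    simp [E, det_diagonal, Finset.prod_update_of_mem]
  refine ⟨⟨μ • (E * P), ?_⟩, ?_⟩
  · rw [det_smul, det_mul, hdetE, ← hε]; ring
  · calc μ • (E * P) * Q * (μ • (E * P))ᵀ = (μ * μ) • (E * (P * Q * Pᵀ) * Eᵀ) := by
          simp only [transpose_smul, transpose_mul, Matrix.smul_mul, Matrix.mul_smul, smul_smul,
            Matrix.mul_assoc]
      _ = (μ * μ) • 1 := by rw [hPQ, Matrix.mul_one, diagonal_transpose, hEE]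

end Matrix

/-- Let `K` be algebraically closed, `g ≥ 1`, and let `Q` be an invertible
symmetric `g × g` matrix over `K`; if `char K = 2`, assume moreover that some diagonal
entry of `Q` is nonzero.  Then for every `ν ∈ K` with `ν^g = det Q` there exists
`Λ ∈ SL_g(K)` with `Λ · Q · Λᵗ = ν · 1_g`. -/
theorem stmt13 (K : Type*) [Field K] [IsAlgClosed K] (g : ℕ) (hg : 1 ≤ g)
    (Q : Matrix (Fin g) (Fin g) K) (hsymm : Qᵀ = Q) (hQ : IsUnit Q.det)
    (h2 : ringChar K = 2 → ∃ i, Q i i ≠ 0)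
    (ν : K) (hν : ν ^ g = Q.det) :
    ∃ Λ : SpecialLinearGroup (Fin g) K,
      (Λ : Matrix (Fin g) (Fin g) K) * Q * (Λ : Matrix (Fin g) (Fin g) K)ᵀ =
        ν • (1 : Matrix (Fin g) (Fin g) K) := by
  have hK : ∀ a : K, IsSquare a := IsAlgClosed.exists_eq_mul_self
  have : Nonempty (Fin g) := ⟨⟨0, hg⟩⟩
  obtain ⟨P, hP⟩ := exists_mul_mul_transpose_eq_one hK hsymm hQ.ne_zero
    (exists_dotProduct_mulVec_self_ne_zero hsymm hQ.ne_zero h2)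
  exact exists_specialLinearGroup_mul_mul_transpose_eq_smul_one hK hP (by rwa [Fintype.card_fin])
end

section
/- Let K be an algebraically closed field, g ≥ 1 an integer, and (Q_0, Q_1) a pair of symmetric g×g matrices over K such that Q_0 is invertible and the characteristic polynomial of Q_0⁻¹·Q_1 has g distinct roots in K; if char K = 2, assume in addition that Tr(Q_0⁻¹·Q_1) ≠ 0. Then there exist Λ ∈ SL_g(K), a scalar λ ∈ K, and a diagonal matrix D ∈ Mat_g(K) such that Λ·Q_0·Λᵗ = λ·1_g and Λ·Q_1·Λᵗ = D. -/
/-!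
With `A = Q₀⁻¹ * Q₁`, a matrix `V` whose columns are eigenvectors of `A` (for the distinct
eigenvalues `μ`) satisfies `Vᵀ Q₁ V = (Vᵀ Q₀ V) * diagonal μ`. Both sides are symmetric, so
`Vᵀ Q₀ V` commutes with `diagonal μ` and is therefore diagonal, and so is `Vᵀ Q₁ V`. Over an
algebraically closed field, a diagonal congruence turns `Vᵀ Q₀ V` into `1`, and a scalar multiple
of the result has determinant `1`, which only replaces `1` by a scalar.
-/

open Matrix

theorem Multiset.exists_injective_fin_mem_of_nodup {α : Type*} [DecidableEq α] {s : Multiset α}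
    (hs : s.Nodup) {m : ℕ} (hm : Multiset.card s = m) :
    ∃ μ : Fin m → α, Function.Injective μ ∧ ∀ i, μ i ∈ s := by
  have e := s.toFinset.equivFinOfCardEq (by rw [Multiset.toFinset_card_of_nodup hs, hm])
  exact ⟨fun i => e.symm i, Subtype.val_injective.comp e.symm.injective,
    fun i => Multiset.mem_toFinset.mp (e.symm i).2⟩

namespace Matrix

theorem IsDiag.diagonal_mul_mul_diagonal {R n : Type*} [NonUnitalNonAssocSemiring R] [Fintype n]
    [DecidableEq n] {B : Matrix n n R} (hB : B.IsDiag) (d e : n → R) :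
    (diagonal d * B * diagonal e).IsDiag := by
  intro i j hij
  simp [diagonal_mul, mul_diagonal, hB hij]

section CommRing

variable {R n : Type*} [CommRing R] [NoZeroDivisors R] [Fintype n] [DecidableEq n]

theorem isDiag_of_commute_diagonal {B : Matrix n n R} {μ : n → R} (hμ : Function.Injective μ)
    (h : Commute (diagonal μ) B) : B.IsDiag := by
  intro i j hij
  have hij' := congr_fun₂ h.eq i j
  rw [diagonal_mul, mul_diagonal] at hij'
  have : (μ i - μ j) * B i j = 0 := by linear_combination hij'
  exact (mul_eq_zero.mp this).resolve_left (sub_ne_zero.mpr (hμ.ne hij))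

theorem isDiag_transpose_mul_mul_of_mul_eq_mul_mul_diagonal {Q₀ Q₁ V : Matrix n n R}
    {μ : n → R} (h0 : Q₀.IsSymm) (h1 : Q₁.IsSymm) (hμ : Function.Injective μ)
    (hV : Q₁ * V = Q₀ * V * diagonal μ) :
    (Vᵀ * Q₀ * V).IsDiag ∧ (Vᵀ * Q₁ * V).IsDiag := by
  set B := Vᵀ * Q₀ * V
  have hB : B.IsSymm := by simp [B, IsSymm, transpose_mul, h0.eq, mul_assoc]
  have hQ₁ : Vᵀ * Q₁ * V = B * diagonal μ := by simp only [B, mul_assoc, hV]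
  have hBμ : (B * diagonal μ).IsSymm := by
    rw [← hQ₁]
    simp [IsSymm, transpose_mul, h1.eq, mul_assoc]
  have hcomm : diagonal μ * B = B * diagonal μ := by
    simpa [IsSymm, transpose_mul, hB.eq] using hBμ
  have hBdiag := isDiag_of_commute_diagonal hμ hcomm
  refine ⟨hBdiag, ?_⟩
  rw [hQ₁, ← one_mul B]
  simpa using (hBdiag.diagonal_mul_mul_diagonal 1 μ)

end CommRing

variable {K n : Type*} [Field K] [Fintype n] [DecidableEq n]

theorem exists_isUnit_mul_eq_mul_diagonal {A : Matrix n n K} {μ : n → K}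
    (hμ : Function.Injective μ) (hroot : ∀ i, A.charpoly.IsRoot (μ i)) :
    ∃ V : Matrix n n K, IsUnit V ∧ A * V = V * diagonal μ := by
  have hev (i : n) : Module.End.HasEigenvalue A.toLin' (μ i) := by
    rw [Module.End.hasEigenvalue_iff_isRoot_charpoly, charpoly_toLin']
    exact hroot i
  choose v hv using fun i => (hev i).exists_hasEigenvector
  have hli : LinearIndependent K v :=
    Module.End.eigenvectors_linearIndependent' _ μ hμ v hv
  refine ⟨(of v)ᵀ, isUnit_transpose _ |>.mpr (linearIndependent_rows_iff_isUnit.mp hli), ?_⟩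
  ext i j
  have := congr_fun (Module.End.mem_eigenspace_iff.mp (hv j).1) i
  simpa [mul_apply, mulVec, dotProduct, diagonal_apply, mul_comm] using this

theorem exists_det_smul_eq_one [IsAlgClosed K] {M : Matrix n n K} (hM : M.det ≠ 0) :
    ∃ s : K, (s • M).det = 1 := by
  cases isEmpty_or_nonempty n
  · exact ⟨1, det_isEmpty⟩
  · obtain ⟨s, hs⟩ := IsAlgClosed.exists_pow_nat_eq M.det⁻¹ (Fintype.card_pos (α := n))
    exact ⟨s, by rw [det_smul, hs, inv_mul_cancel₀ hM]⟩

theorem IsDiag.exists_diagonal_mul_mul_diagonal_eq_one [IsAlgClosed K] {B : Matrix n n K}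
    (hB : B.IsDiag) (hdet : B.det ≠ 0) : ∃ r : n → K, diagonal r * B * diagonal r = 1 := by
  rw [← hB.diagonal_diag, det_diagonal, Finset.prod_ne_zero_iff] at hdet
  choose r hr using fun i => IsAlgClosed.exists_pow_nat_eq (B i i)⁻¹ two_pos
  refine ⟨r, ?_⟩
  rw [← hB.diagonal_diag, diagonal_mul_diagonal, diagonal_mul_diagonal, ← diagonal_one]
  congr 1
  funext i
  rw [mul_right_comm, ← sq, hr]
  exact inv_mul_cancel₀ (hdet i (Finset.mem_univ i))

theorem exists_specialLinearGroup_congr_eq_smul_one_of_isDiag [IsAlgClosed K]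
    {Q₀ Q₁ M : Matrix n n K} (hQ₀ : Q₀.det ≠ 0) (hM : M.det ≠ 0)
    (h0 : (M * Q₀ * Mᵀ).IsDiag) (h1 : (M * Q₁ * Mᵀ).IsDiag) :
    ∃ (Λ : SpecialLinearGroup n K) (lam : K),
      (Λ : Matrix n n K) * Q₀ * (Λ : Matrix n n K)ᵀ = lam • 1 ∧
      ((Λ : Matrix n n K) * Q₁ * (Λ : Matrix n n K)ᵀ).IsDiag := by
  obtain ⟨r, hr⟩ := h0.exists_diagonal_mul_mul_diagonal_eq_one (by simp [hQ₀, hM])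
  set N := diagonal r * M
  have hN (Q : Matrix n n K) : N * Q * Nᵀ = diagonal r * (M * Q * Mᵀ) * diagonal r := by
    simp only [N, transpose_mul, diagonal_transpose, mul_assoc]
  have hNdet : N.det ≠ 0 := by
    have h := congr_arg det ((hN Q₀).trans hr)
    rw [det_mul, det_mul, det_transpose, det_one, mul_assoc] at h
    exact left_ne_zero_of_mul_eq_one h
  obtain ⟨s, hs⟩ := exists_det_smul_eq_one hNdet
  have hsN (Q : Matrix n n K) : (s • N) * Q * (s • N)ᵀ = (s * s) • (N * Q * Nᵀ) := by
    rw [transpose_smul, smul_mul, smul_mul, Matrix.mul_smul, smul_smul]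
  refine ⟨⟨s • N, hs⟩, s * s, ?_, ?_⟩
  · simp only [hsN, hN, hr]
  · simpa only [SpecialLinearGroup.coe_mk, hsN, hN] using
      (h1.diagonal_mul_mul_diagonal r r).smul (s * s)

end Matrix

theorem stmt14_general (K : Type*) [Field K] [IsAlgClosed K] (g : ℕ)
    (Q₀ Q₁ : Matrix (Fin g) (Fin g) K) (h0 : Q₀ᵀ = Q₀) (h1 : Q₁ᵀ = Q₁)
    (hdet : IsUnit Q₀.det)
    (hcard : Multiset.card (Q₀⁻¹ * Q₁).charpoly.roots = g)
    (hnodup : (Q₀⁻¹ * Q₁).charpoly.roots.Nodup) :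
    ∃ (Λ : SpecialLinearGroup (Fin g) K) (lam : K) (D : Matrix (Fin g) (Fin g) K),
      D.IsDiag ∧
      (Λ : Matrix (Fin g) (Fin g) K) * Q₀ * (Λ : Matrix (Fin g) (Fin g) K)ᵀ =
        lam • (1 : Matrix (Fin g) (Fin g) K) ∧
      (Λ : Matrix (Fin g) (Fin g) K) * Q₁ * (Λ : Matrix (Fin g) (Fin g) K)ᵀ = D := by
  classical
  obtain ⟨μ, hμ, hmem⟩ := Multiset.exists_injective_fin_mem_of_nodup hnodup hcard
  obtain ⟨V, hV, hAV⟩ := exists_isUnit_mul_eq_mul_diagonal hμ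
    fun i => Polynomial.isRoot_of_mem_roots (hmem i)
  have hQV : Q₁ * V = Q₀ * V * diagonal μ := by
    rw [mul_assoc, ← hAV, ← mul_assoc, ← mul_assoc, mul_nonsing_inv Q₀ hdet, one_mul]
  obtain ⟨hV0, hV1⟩ := isDiag_transpose_mul_mul_of_mul_eq_mul_mul_diagonal h0 h1 hμ hQV
  rw [← transpose_transpose V] at hV0 hV1
  obtain ⟨Λ, lam, hΛ0, hΛ1⟩ := exists_specialLinearGroup_congr_eq_smul_one_of_isDiag hdet.ne_zero
    (by simpa using ((isUnit_iff_isUnit_det V).mp hV).ne_zero) hV0 hV1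
  exact ⟨Λ, lam, _, hΛ1, hΛ0, rfl⟩

/-- Let `K` be algebraically closed, `g ≥ 1`, and let `(Q₀, Q₁)` be a pair of
symmetric `g × g` matrices over `K` such that `Q₀` is invertible and the characteristic
polynomial of `Q₀⁻¹ · Q₁` has `g` distinct roots in `K` (i.e. its multiset of roots has
`g` elements and no duplicates); if `char K = 2`, assume moreover `Tr (Q₀⁻¹ · Q₁) ≠ 0`.
Then there are `Λ ∈ SL_g(K)`, a scalar `λ ∈ K`, and a diagonal matrix `D` with
`Λ · Q₀ · Λᵗ = λ · 1_g` and `Λ · Q₁ · Λᵗ = D`. -/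
theorem stmt14 (K : Type*) [Field K] [IsAlgClosed K] (g : ℕ) (hg : 1 ≤ g)
    (Q₀ Q₁ : Matrix (Fin g) (Fin g) K) (h0 : Q₀ᵀ = Q₀) (h1 : Q₁ᵀ = Q₁)
    (hdet : IsUnit Q₀.det)
    (hcard : Multiset.card (Q₀⁻¹ * Q₁).charpoly.roots = g)
    (hnodup : (Q₀⁻¹ * Q₁).charpoly.roots.Nodup)
    (h2 : ringChar K = 2 → Matrix.trace (Q₀⁻¹ * Q₁) ≠ 0) :
    ∃ (Λ : SpecialLinearGroup (Fin g) K) (lam : K) (D : Matrix (Fin g) (Fin g) K),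
      D.IsDiag ∧
      (Λ : Matrix (Fin g) (Fin g) K) * Q₀ * (Λ : Matrix (Fin g) (Fin g) K)ᵀ =
        lam • (1 : Matrix (Fin g) (Fin g) K) ∧
      (Λ : Matrix (Fin g) (Fin g) K) * Q₁ * (Λ : Matrix (Fin g) (Fin g) K)ᵀ = D :=
  stmt14_general K g Q₀ Q₁ h0 h1 hdet hcard hnodup
end

section
/- Let B be an integral domain and let x_1, y_1, x_2, y_2 ∈ B be nonzero prime elements generating pairwise distinct principal ideals, such that y_1·x_2 does not belong to the ideal of B generated by x_1 and y_2. Then for all f_1, f_2 ∈ B and all nonnegative integers n_1, m_1, n_2, m_2, the following inequality holds in the fraction field of B: y_1·x_2/(x_1·y_2) ≠ f_1/(x_1^{n_1}·y_1^{m_1}) − f_2/(x_2^{n_2}·y_2^{m_2}). -/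
/-- Two primes generating distinct span ideals do not divide each other. -/
private lemma stmt19_nd {B : Type*} [CommRing B] [IsDomain B] {p q : B}
    (hp : Prime p) (hq : Prime q) (h : Ideal.span {p} ≠ Ideal.span {q}) : ¬ p ∣ q := by
  rintro ⟨c, rfl⟩
  rcases hq.irreducible.isUnit_or_isUnit rfl with hu | hu
  · exact hp.not_unit hu
  · exact h (Ideal.span_singleton_eq_span_singleton.mpr ⟨hu.unit, rfl⟩)

/-- A prime not dividing `a`, `b`, `c` does not divide `a^i * b^j * c^k`. -/
private lemma stmt19_ndp {B : Type*} [CommRing B] [IsDomain B] {p a b c : B}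
    (hp : Prime p) (ha : ¬ p ∣ a) (hb : ¬ p ∣ b) (hc : ¬ p ∣ c) (i j k : ℕ) :
    ¬ p ∣ a ^ i * b ^ j * c ^ k := by
  intro h
  rcases hp.dvd_mul.mp h with h' | h'
  · rcases hp.dvd_mul.mp h' with h'' | h''
    · exact ha (hp.dvd_of_dvd_pow h'')
    · exact hb (hp.dvd_of_dvd_pow h'')
  · exact hc (hp.dvd_of_dvd_pow h')

private lemma stmt19_key {B : Type*} [CommRing B] [IsDomain B]
    (x₁ y₁ x₂ y₂ : B) (hx₁ : Prime x₁) (hy₁ : Prime y₁) (hx₂ : Prime x₂) (hy₂ : Prime y₂)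
    (hx₁x₂ : ¬ x₁ ∣ x₂) (hx₁y₂ : ¬ x₁ ∣ y₂)
    (hy₂x₁ : ¬ y₂ ∣ x₁) (hy₂y₁ : ¬ y₂ ∣ y₁)
    (hx₂x₁ : ¬ x₂ ∣ x₁) (hx₂y₁ : ¬ x₂ ∣ y₁)
    (hy₁x₂ : ¬ y₁ ∣ x₂) (hy₁y₂ : ¬ y₁ ∣ y₂)
    (hmem : y₁ * x₂ ∉ Ideal.span {x₁, y₂}) :
    ∀ N n₁ m₁ n₂ m₂ : ℕ, ∀ f₁ f₂ : B, n₁ + m₁ + n₂ + m₂ ≤ N →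
      y₁ ^ (m₁+1) * x₂ ^ (n₂+1) * x₁ ^ n₁ * y₂ ^ m₂ =
        f₁ * x₂ ^ n₂ * y₂ ^ (m₂+1) - f₂ * x₁ ^ (n₁+1) * y₁ ^ m₁ → False := by
  intro N
  induction N with
  | zero =>
    intro n₁ m₁ n₂ m₂ f₁ f₂ hle heq
    obtain ⟨rfl, rfl, rfl, rfl⟩ : n₁ = 0 ∧ m₁ = 0 ∧ n₂ = 0 ∧ m₂ = 0 := by omega
    exact hmem (Ideal.mem_span_pair.mpr ⟨-f₂, f₁, by linear_combination -heq⟩)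
  | succ N ih =>
    intro n₁ m₁ n₂ m₂ f₁ f₂ hle heq
    rcases n₁ with _ | n₁
    · rcases m₂ with _ | m₂
      · rcases n₂ with _ | n₂
        · rcases m₁ with _ | m₁
          · exact hmem (Ideal.mem_span_pair.mpr ⟨-f₂, f₁, by linear_combination -heq⟩)
          · -- reduce m₁ : y₁ ∣ f₁
            have hd : y₁ ∣ f₁ * (y₂ ^ 1 * (1:B) ^ 0 * (1:B) ^ 0) := by
              refine ⟨y₁ ^ (m₁+1) * x₂ + f₂ * x₁ * y₁ ^ m₁, ?_⟩
              linear_combination -heq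
            have : y₁ ∣ f₁ := by
              rcases hy₁.dvd_mul.mp hd with h' | h'
              · exact h'
              · exact absurd h' (stmt19_ndp hy₁ hy₁y₂ (fun h => hy₁.not_unit (isUnit_of_dvd_one h))
                  (fun h => hy₁.not_unit (isUnit_of_dvd_one h)) 1 0 0)
            obtain ⟨f₁', rfl⟩ := this
            refine ih 0 m₁ 0 0 f₁' f₂ (by omega) ?_
            apply mul_left_cancel₀ hy₁.ne_zero
            linear_combination heq
        · -- reduce n₂ : x₂ ∣ f₂
          have hd : x₂ ∣ f₂ * (x₁ ^ 1 * y₁ ^ m₁ * (1:B) ^ 0) := by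
            refine ⟨f₁ * x₂ ^ n₂ * y₂ - y₁ ^ (m₁+1) * x₂ ^ (n₂+1), ?_⟩
            linear_combination heq
          have : x₂ ∣ f₂ := by
            rcases hx₂.dvd_mul.mp hd with h' | h'
            · exact h'
            · exact absurd h' (stmt19_ndp hx₂ hx₂x₁ hx₂y₁
                (fun h => hx₂.not_unit (isUnit_of_dvd_one h)) 1 m₁ 0)
          obtain ⟨f₂', rfl⟩ := this
          refine ih 0 m₁ n₂ 0 f₁ f₂' (by omega) ?_
          apply mul_left_cancel₀ hx₂.ne_zero
          linear_combination heq
      · -- reduce m₂ : y₂ ∣ f₂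
        have hd : y₂ ∣ f₂ * (x₁ ^ 1 * y₁ ^ m₁ * (1:B) ^ 0) := by
          refine ⟨f₁ * x₂ ^ n₂ * y₂ ^ (m₂+1) - y₁ ^ (m₁+1) * x₂ ^ (n₂+1) * y₂ ^ m₂, ?_⟩
          linear_combination heq
        have : y₂ ∣ f₂ := by
          rcases hy₂.dvd_mul.mp hd with h' | h'
          · exact h'
          · exact absurd h' (stmt19_ndp hy₂ hy₂x₁ hy₂y₁
              (fun h => hy₂.not_unit (isUnit_of_dvd_one h)) 1 m₁ 0)
        obtain ⟨f₂', rfl⟩ := this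
        refine ih 0 m₁ n₂ m₂ f₁ f₂' (by omega) ?_
        apply mul_left_cancel₀ hy₂.ne_zero
        linear_combination heq
    · -- reduce n₁ : x₁ ∣ f₁
      have hd : x₁ ∣ f₁ * (x₂ ^ n₂ * y₂ ^ (m₂+1) * (1:B) ^ 0) := by
        refine ⟨y₁ ^ (m₁+1) * x₂ ^ (n₂+1) * x₁ ^ n₁ * y₂ ^ m₂ + f₂ * x₁ ^ (n₁+1) * y₁ ^ m₁, ?_⟩
        linear_combination -heq
      have : x₁ ∣ f₁ := by
        rcases hx₁.dvd_mul.mp hd with h' | h'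
        · exact h'
        · exact absurd h' (stmt19_ndp hx₁ hx₁x₂ hx₁y₂
            (fun h => hx₁.not_unit (isUnit_of_dvd_one h)) n₂ (m₂+1) 0)
      obtain ⟨f₁', rfl⟩ := this
      refine ih n₁ m₁ n₂ m₂ f₁' f₂ (by omega) ?_
      apply mul_left_cancel₀ hx₁.ne_zero
      linear_combination heq

/-- Let `B` be an integral domain and `x₁, y₁, x₂, y₂ ∈ B` nonzero prime
elements generating pairwise distinct principal ideals, with `y₁·x₂` not in the ideal
generated by `x₁` and `y₂`.  Then in the fraction field of `B`, for all `f₁, f₂ ∈ B` and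
all `n₁, m₁, n₂, m₂ ∈ ℕ`:
`y₁·x₂/(x₁·y₂) ≠ f₁/(x₁^{n₁}·y₁^{m₁}) − f₂/(x₂^{n₂}·y₂^{m₂})`. -/
theorem stmt19 (B : Type*) [CommRing B] [IsDomain B]
    (x₁ y₁ x₂ y₂ : B) (hx₁ : Prime x₁) (hy₁ : Prime y₁) (hx₂ : Prime x₂) (hy₂ : Prime y₂)
    (hdist : Function.Injective fun i : Fin 4 => Ideal.span {![x₁, y₁, x₂, y₂] i})
    (hmem : y₁ * x₂ ∉ Ideal.span {x₁, y₂})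
    (f₁ f₂ : B) (n₁ m₁ n₂ m₂ : ℕ) :
    algebraMap B (FractionRing B) (y₁ * x₂) / algebraMap B (FractionRing B) (x₁ * y₂) ≠
      algebraMap B (FractionRing B) f₁ / algebraMap B (FractionRing B) (x₁ ^ n₁ * y₁ ^ m₁) -
      algebraMap B (FractionRing B) f₂ / algebraMap B (FractionRing B) (x₂ ^ n₂ * y₂ ^ m₂) := by
  -- pairwise non-divisibility facts
  have hne : ∀ i j : Fin 4, i ≠ j →
      Ideal.span {![x₁, y₁, x₂, y₂] i} ≠ Ideal.span {![x₁, y₁, x₂, y₂] j} :=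
    fun i j h => hdist.ne h
  have hx₁y₁ : ¬ x₁ ∣ y₁ := stmt19_nd hx₁ hy₁ (hne 0 1 (by decide))
  have hx₁x₂ : ¬ x₁ ∣ x₂ := stmt19_nd hx₁ hx₂ (hne 0 2 (by decide))
  have hx₁y₂ : ¬ x₁ ∣ y₂ := stmt19_nd hx₁ hy₂ (hne 0 3 (by decide))
  have hy₁x₂ : ¬ y₁ ∣ x₂ := stmt19_nd hy₁ hx₂ (hne 1 2 (by decide))
  have hy₁y₂ : ¬ y₁ ∣ y₂ := stmt19_nd hy₁ hy₂ (hne 1 3 (by decide))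
  have hx₂x₁ : ¬ x₂ ∣ x₁ := stmt19_nd hx₂ hx₁ (hne 2 0 (by decide))
  have hx₂y₁ : ¬ x₂ ∣ y₁ := stmt19_nd hx₂ hy₁ (hne 2 1 (by decide))
  have hy₂x₁ : ¬ y₂ ∣ x₁ := stmt19_nd hy₂ hx₁ (hne 3 0 (by decide))
  have hy₂y₁ : ¬ y₂ ∣ y₁ := stmt19_nd hy₂ hy₁ (hne 3 1 (by decide))
  have hy₂x₂ : ¬ y₂ ∣ x₂ := stmt19_nd hy₂ hx₂ (hne 3 2 (by decide))
  intro h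
  have inj := IsFractionRing.injective B (FractionRing B)
  have hne0 : ∀ b : B, b ≠ 0 → algebraMap B (FractionRing B) b ≠ 0 := by
    intro b hb hc
    exact hb (inj (by simpa using hc))
  have hd₁ : (x₁ * y₂ : B) ≠ 0 := mul_ne_zero hx₁.ne_zero hy₂.ne_zero
  have hd₂ : (x₁ ^ n₁ * y₁ ^ m₁ : B) ≠ 0 :=
    mul_ne_zero (pow_ne_zero _ hx₁.ne_zero) (pow_ne_zero _ hy₁.ne_zero)
  have hd₃ : (x₂ ^ n₂ * y₂ ^ m₂ : B) ≠ 0 :=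
    mul_ne_zero (pow_ne_zero _ hx₂.ne_zero) (pow_ne_zero _ hy₂.ne_zero)
  -- clear denominators
  have key_eq : y₁ * x₂ * ((x₁ ^ n₁ * y₁ ^ m₁) * (x₂ ^ n₂ * y₂ ^ m₂)) =
      (f₁ * (x₂ ^ n₂ * y₂ ^ m₂) - f₂ * (x₁ ^ n₁ * y₁ ^ m₁)) * (x₁ * y₂) := by
    apply inj
    have h₁ := hne0 _ hd₁
    have h₂ := hne0 _ hd₂
    have h₃ := hne0 _ hd₃
    simp only [map_mul, map_sub, map_pow]
    rw [div_sub_div _ _ h₂ h₃, div_eq_div_iff h₁ (mul_ne_zero h₂ h₃)] at h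
    simp only [map_mul, map_sub, map_pow] at h
    linear_combination h
  -- n₁ must be positive
  rcases n₁ with _ | n₁
  · refine stmt19_ndp hx₁ hx₁y₁ hx₁x₂ hx₁y₂ (m₁+1) (n₂+1) m₂ ?_
    exact ⟨(f₁ * (x₂ ^ n₂ * y₂ ^ m₂) - f₂ * (1 * y₁ ^ m₁)) * y₂, by linear_combination key_eq⟩
  -- m₂ must be positive
  rcases m₂ with _ | m₂
  · refine stmt19_ndp hy₂ hy₂y₁ hy₂x₂ hy₂x₁ (m₁+1) (n₂+1) (n₁+1) ?_
    exact ⟨(f₁ * (x₂ ^ n₂ * 1) - f₂ * (x₁ ^ (n₁+1) * y₁ ^ m₁)) * x₁, by linear_combination key_eq⟩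
  -- cancel x₁ * y₂ and conclude by the key lemma
  refine stmt19_key x₁ y₁ x₂ y₂ hx₁ hy₁ hx₂ hy₂ hx₁x₂ hx₁y₂ hy₂x₁ hy₂y₁ hx₂x₁ hx₂y₁ hy₁x₂ hy₁y₂
    hmem (n₁ + m₁ + n₂ + m₂) n₁ m₁ n₂ m₂ f₁ f₂ le_rfl ?_
  apply mul_left_cancel₀ hd₁
  linear_combination key_eq
end
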